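/- In the ±J Ising spin glass on the Nishimori line (β = β_N with exp(2β_N J) = p/(1−p)), the sign identity specializes to −E[sgn_A(β_N)] = E[(sinh(2β_N J_A)/(2J_A))·|Δ(β_N,J_A)|], and consequently E[sgn_A(β_N)] ≤ 0; i.e., on the Nishimori line the thermal average of the local energy is at least as likely to be below −J_A tanh(β_N J_A) as above it. -/

import Mathlib

open Finset Real

/-- Spin value of a Boolean spin variable: `true ↦ 1`, `false ↦ -1`. -/
def spin (b : Bool) : ℝ := if b then 1 else -1

/-- Energy of a finite Ising system: `H(S) = -∑_{A ⊆ V} J_A ∏_{i ∈ A} S_i`. -/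
noncomputable def energy {V : Type*} [Fintype V] [DecidableEq V]
    (J : Finset V → ℝ) (S : V → Bool) : ℝ :=
  -∑ A : Finset V, J A * ∏ i ∈ A, spin (S i)

/-- Partition function `Z(β, J) = ∑_S exp (-β H(S))`. -/
noncomputable def Z {V : Type*} [Fintype V] [DecidableEq V]
    (β : ℝ) (J : Finset V → ℝ) : ℝ :=
  ∑ S : V → Bool, Real.exp (-β * energy J S)

/-- Thermal average `⟨f⟩_β = Z⁻¹ ∑_S f(S) exp (-β H(S))`. -/
noncomputable def texp {V : Type*} [Fintype V] [DecidableEq V]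
    (β : ℝ) (J : Finset V → ℝ) (f : (V → Bool) → ℝ) : ℝ :=
  (∑ S : V → Bool, f S * Real.exp (-β * energy J S)) / Z β J

/-- Thermal average of the local energy of subset `A`:
`e_A(β, J_A) = -⟨J_A ∏_{i ∈ A} S_i⟩_β`. -/
noncomputable def eA {V : Type*} [Fintype V] [DecidableEq V]
    (β : ℝ) (J : Finset V → ℝ) (A : Finset V) : ℝ :=
  texp β J (fun S => -(J A * ∏ i ∈ A, spin (S i)))

/-- Deviation of the local energy from its isolated value:
`Δ(β, J_A) = e_A(β, J_A) + J_A tanh (β J_A)`. -/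
noncomputable def Δ {V : Type*} [Fintype V] [DecidableEq V]
    (β : ℝ) (J : Finset V → ℝ) (A : Finset V) : ℝ :=
  eA β J A + J A * Real.tanh (β * J A)

/-- Couplings with the single coupling `J_A` negated. -/
noncomputable def flipJ {V : Type*} [DecidableEq V]
    (J : Finset V → ℝ) (A : Finset V) : Finset V → ℝ :=
  Function.update J A (-(J A))

/-- Probability of the sign configuration `σ` for i.i.d. `±J` couplings with
`P(+J) = p`, `P(-J) = 1 - p`. -/
noncomputable def prob {V : Type*} [Fintype V] [DecidableEq V]
    (p : ℝ) (σ : Finset V → Bool) : ℝ :=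
  ∏ B : Finset V, if σ B then p else 1 - p

/-- The `±J` coupling configuration determined by the signs `σ`. -/
noncomputable def Jc {V : Type*} (J0 : ℝ) (σ : Finset V → Bool) :
    Finset V → ℝ :=
  fun B => spin (σ B) * J0

/-!
Negating the single coupling `J_A` multiplies the Boltzmann weight of `S` by
`cosh (2βJ_A) - sinh (2βJ_A) ∏_{i ∈ A} S_i`. Writing `Z'`, `Δ'` for the flipped system and
`r = sinh (2βJ_A) / (2J_A)`, this gives `Δ' Z' = -Δ Z` and `Z - Z' = -2 r Δ Z`, so the
`Z`-weighted values of `sgn Δ + r |Δ|` cancel in each pair `{J, J'}`. The gauge transformation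
`J_B ↦ J_B ∏_{i ∈ B} τ_i` leaves `sgn Δ + r |Δ|` unchanged, and on the Nishimori line the gauge
average of the `±J` distribution is proportional to `Z(β_N, J)`. Hence the expectation of
`sgn Δ + r |Δ|` vanishes, and `r > 0` gives the sign.
-/

lemma spin_beq (a b : Bool) : spin (a == b) = spin a * spin b := by
  cases a <;> cases b <;> norm_num [spin]

lemma spin_mul_self (b : Bool) : spin b * spin b = 1 := by
  cases b <;> norm_num [spin]

lemma prod_spin_eq_one_or {ι : Type*} (s : Finset ι) (S : ι → Bool) :
    ∏ i ∈ s, spin (S i) = 1 ∨ ∏ i ∈ s, spin (S i) = -1 := by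
  refine Finset.prod_induction _ (fun x => x = 1 ∨ x = -1) ?_ (Or.inl rfl) ?_
  · rintro a b (rfl | rfl) (rfl | rfl) <;> norm_num
  · intro i _
    cases S i <;> simp [spin]

lemma prod_spin_mul_self {ι : Type*} (s : Finset ι) (S : ι → Bool) :
    (∏ i ∈ s, spin (S i)) * ∏ i ∈ s, spin (S i) = 1 := by
  rw [← Finset.prod_mul_distrib]
  exact Finset.prod_eq_one fun i _ => spin_mul_self (S i)

lemma exp_mul_of_eq_one_or {x s : ℝ} (hs : s = 1 ∨ s = -1) :
    exp (x * s) = cosh x + sinh x * s := by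
  rcases hs with rfl | rfl
  · rw [mul_one, mul_one, cosh_add_sinh]
  · rw [mul_neg_one, mul_neg_one, ← sub_eq_add_neg, cosh_sub_sinh]

lemma cosh_two_mul_sub_tanh_mul_sinh_two_mul (x : ℝ) :
    cosh (2 * x) - tanh x * sinh (2 * x) = 1 := by
  have hc := cosh_pos x
  rw [tanh_eq_sinh_div_cosh, sinh_two_mul, cosh_two_mul]
  field_simp
  linear_combination cosh_sq x

lemma tanh_mul_cosh_two_mul_sub_sinh_two_mul (x : ℝ) :
    tanh x * cosh (2 * x) - sinh (2 * x) = -tanh x := by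
  have hc := cosh_pos x
  rw [tanh_eq_sinh_div_cosh, sinh_two_mul, cosh_two_mul]
  field_simp
  linear_combination (-sinh x) * cosh_sq x

lemma sinh_mul_neg_div_two_mul_neg (a x : ℝ) :
    sinh (a * -x) / (2 * -x) = sinh (a * x) / (2 * x) := by
  rw [mul_neg, sinh_neg, mul_neg, neg_div_neg_eq]

lemma sinh_two_mul_mul_div_two_mul_pos {β x : ℝ} (hβ : 0 < β) (hx : x ≠ 0) :
    0 < sinh (2 * β * x) / (2 * x) := by
  rcases hx.lt_or_gt with hx | hx
  · rw [← neg_neg x, sinh_mul_neg_div_two_mul_neg]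
    exact div_pos (sinh_pos_iff.2 (by nlinarith)) (by linarith)
  · exact div_pos (sinh_pos_iff.2 (by positivity)) (by positivity)

lemma add_mul_abs_pair_eq_zero {z z' d d' r : ℝ} (hz : 0 < z) (hz' : 0 < z') (hd : d ≠ 0)
    (hdd' : d' * z' = -(d * z)) (hzz' : z - z' = -(2 * r * d * z)) :
    (d / |d| + r * |d|) * z + (d' / |d'| + r * |d'|) * z' = 0 := by
  rcases hd.lt_or_gt with hd | hd
  · have hd' : 0 < d' := pos_of_mul_pos_left (by nlinarith) hz'.le
    rw [abs_of_neg hd, abs_of_pos hd', div_neg, div_self hd.ne, div_self hd'.ne']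
    linear_combination r * hdd' - hzz'
  · have hd' : d' < 0 := neg_of_mul_neg_left (by nlinarith) hz'.le
    rw [abs_of_pos hd, abs_of_neg hd', div_neg, div_self hd.ne', div_self hd'.ne]
    linear_combination (-r) * hdd' + hzz'

section Couplings

variable {V : Type*}

lemma flipJ_self [DecidableEq V] (J : Finset V → ℝ) (A : Finset V) :
    flipJ J A A = -J A :=
  Function.update_self _ _ _

lemma Jc_eq_or (J0 : ℝ) (σ : Finset V → Bool) (B : Finset V) :
    Jc J0 σ B = J0 ∨ Jc J0 σ B = -J0 := by
  unfold Jc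
  cases σ B <;> simp [spin]

lemma Jc_ne_zero {J0 : ℝ} (hJ0 : J0 ≠ 0) (σ : Finset V → Bool) (B : Finset V) :
    Jc J0 σ B ≠ 0 := by
  rcases Jc_eq_or J0 σ B with h | h <;> simpa [h] using hJ0

lemma Jc_update_not [DecidableEq V] (J0 : ℝ) (σ : Finset V → Bool) (A : Finset V) :
    Jc J0 (Function.update σ A (!σ A)) = flipJ (Jc J0 σ) A := by
  funext B
  rcases eq_or_ne B A with rfl | hB
  · simp only [flipJ_self, Jc, Function.update_self]
    cases σ B <;> norm_num [spin]
  · rw [flipJ, Function.update_of_ne hB, Jc, Jc, Function.update_of_ne hB]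

def gaugeJ (τ : V → Bool) (J : Finset V → ℝ) : Finset V → ℝ :=
  fun B => J B * ∏ i ∈ B, spin (τ i)

noncomputable def parity (τ : V → Bool) (B : Finset V) : Bool :=
  decide (∏ i ∈ B, spin (τ i) = 1)

lemma spin_parity (τ : V → Bool) (B : Finset V) : spin (parity τ B) = ∏ i ∈ B, spin (τ i) := by
  rcases prod_spin_eq_one_or B τ with h | h <;> rw [parity, h] <;> norm_num [spin]

noncomputable def gaugeSign (τ : V → Bool) (σ : Finset V → Bool) : Finset V → Bool :=
  fun B => σ B == parity τ B

lemma Jc_gaugeSign (J0 : ℝ) (τ : V → Bool) (σ : Finset V → Bool) :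
    Jc J0 (gaugeSign τ σ) = gaugeJ τ (Jc J0 σ) := by
  funext B
  simp only [Jc, gaugeSign, gaugeJ, spin_beq, spin_parity]
  ring

lemma gaugeSign_involutive (τ : V → Bool) : Function.Involutive (gaugeSign τ) := fun σ => by
  funext B
  show ((σ B == parity τ B) == parity τ B) = σ B
  cases σ B <;> cases parity τ B <;> rfl

end Couplings

section Thermal

variable {V : Type*} [Fintype V] [DecidableEq V]

lemma Z_pos (β : ℝ) (J : Finset V → ℝ) : 0 < Z β J :=
  Finset.sum_pos (fun _ _ => exp_pos _) Finset.univ_nonempty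

noncomputable def corrSum (β : ℝ) (J : Finset V → ℝ) (A : Finset V) : ℝ :=
  ∑ S : V → Bool, (∏ i ∈ A, spin (S i)) * exp (-β * energy J S)

lemma Δ_mul_Z (β : ℝ) (J : Finset V → ℝ) (A : Finset V) :
    Δ β J A * Z β J = J A * (tanh (β * J A) * Z β J - corrSum β J A) := by
  have hZ : Z β J ≠ 0 := (Z_pos β J).ne'
  have hcorr : eA β J A * Z β J = -(J A * corrSum β J A) := by
    rw [eA, texp, div_mul_cancel₀ _ hZ, corrSum, Finset.mul_sum, ← Finset.sum_neg_distrib]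
    exact Finset.sum_congr rfl fun S _ => by ring
  rw [Δ, add_mul, hcorr]
  ring

lemma energy_flipJ (J : Finset V → ℝ) (A : Finset V) (S : V → Bool) :
    energy (flipJ J A) S = energy J S + 2 * J A * ∏ i ∈ A, spin (S i) := by
  have hsplit : ∀ K : Finset V → ℝ, energy K S = -(K A * ∏ i ∈ A, spin (S i)
      + ∑ B ∈ Finset.univ.erase A, K B * ∏ i ∈ B, spin (S i)) := fun K => by
    rw [energy, ← Finset.add_sum_erase _ _ (Finset.mem_univ A)]
  have hrest : ∑ B ∈ Finset.univ.erase A, flipJ J A B * ∏ i ∈ B, spin (S i)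
      = ∑ B ∈ Finset.univ.erase A, J B * ∏ i ∈ B, spin (S i) :=
    Finset.sum_congr rfl fun B hB => by
      rw [flipJ, Function.update_of_ne (Finset.ne_of_mem_erase hB)]
  rw [hsplit, hsplit, hrest, flipJ_self]
  ring

lemma exp_energy_flipJ (β : ℝ) (J : Finset V → ℝ) (A : Finset V) (S : V → Bool) :
    exp (-β * energy (flipJ J A) S) = exp (-β * energy J S) *
      (cosh (2 * β * J A) - sinh (2 * β * J A) * ∏ i ∈ A, spin (S i)) := by
  rw [energy_flipJ, show -β * (energy J S + 2 * J A * ∏ i ∈ A, spin (S i))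
      = -β * energy J S + -(2 * β * J A) * ∏ i ∈ A, spin (S i) by ring,
    exp_add, exp_mul_of_eq_one_or (prod_spin_eq_one_or A S), cosh_neg, sinh_neg]
  ring

lemma Z_flipJ (β : ℝ) (J : Finset V → ℝ) (A : Finset V) :
    Z β (flipJ J A) = cosh (2 * β * J A) * Z β J - sinh (2 * β * J A) * corrSum β J A := by
  rw [Z, Z, corrSum, Finset.mul_sum, Finset.mul_sum, ← Finset.sum_sub_distrib]
  exact Finset.sum_congr rfl fun S _ => by rw [exp_energy_flipJ]; ring

lemma corrSum_flipJ (β : ℝ) (J : Finset V → ℝ) (A : Finset V) :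
    corrSum β (flipJ J A) A
      = cosh (2 * β * J A) * corrSum β J A - sinh (2 * β * J A) * Z β J := by
  rw [Z, corrSum, corrSum, Finset.mul_sum, Finset.mul_sum, ← Finset.sum_sub_distrib]
  refine Finset.sum_congr rfl fun S _ => ?_
  rw [exp_energy_flipJ]
  linear_combination (-sinh (2 * β * J A) * exp (-β * energy J S)) * prod_spin_mul_self A S

lemma Δ_flipJ_mul_Z (β : ℝ) (J : Finset V → ℝ) (A : Finset V) :
    Δ β (flipJ J A) A * Z β (flipJ J A) = -(Δ β J A * Z β J) := by
  rw [Δ_mul_Z, Δ_mul_Z, flipJ_self, Z_flipJ, corrSum_flipJ, mul_neg, tanh_neg,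
    mul_assoc 2 β]
  linear_combination (J A * corrSum β J A) * cosh_two_mul_sub_tanh_mul_sinh_two_mul (β * J A)
    + (J A * Z β J) * tanh_mul_cosh_two_mul_sub_sinh_two_mul (β * J A)

lemma mul_Z_sub_Z_flipJ (β : ℝ) (J : Finset V → ℝ) (A : Finset V) :
    J A * (Z β J - Z β (flipJ J A)) = -(sinh (2 * β * J A) * (Δ β J A * Z β J)) := by
  rw [Z_flipJ, Δ_mul_Z, mul_assoc 2 β]
  linear_combination (-(J A * Z β J)) * cosh_two_mul_sub_tanh_mul_sinh_two_mul (β * J A)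

noncomputable def signTerm (β : ℝ) (J : Finset V → ℝ) (A : Finset V) : ℝ :=
  Δ β J A / |Δ β J A| + sinh (2 * β * J A) / (2 * J A) * |Δ β J A|

lemma signTerm_mul_Z_add_flipJ (β : ℝ) (J : Finset V → ℝ) (A : Finset V)
    (hJ : J A ≠ 0) (hΔ : Δ β J A ≠ 0) :
    signTerm β J A * Z β J + signTerm β (flipJ J A) A * Z β (flipJ J A) = 0 := by
  have hZ : Z β J - Z β (flipJ J A)
      = -(2 * (sinh (2 * β * J A) / (2 * J A)) * Δ β J A * Z β J) := by
    refine mul_left_cancel₀ hJ ?_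
    rw [mul_Z_sub_Z_flipJ]
    field_simp
  rw [signTerm, signTerm, flipJ_self, sinh_mul_neg_div_two_mul_neg]
  exact add_mul_abs_pair_eq_zero (Z_pos β J) (Z_pos β _) hΔ (Δ_flipJ_mul_Z β J A) hZ

lemma sum_signTerm_Jc_mul_Z (β J0 : ℝ) (A : Finset V) (hJ0 : J0 ≠ 0)
    (hΔ : ∀ σ : Finset V → Bool, Δ β (Jc J0 σ) A ≠ 0) :
    ∑ σ : Finset V → Bool, signTerm β (Jc J0 σ) A * Z β (Jc J0 σ) = 0 := by
  refine Finset.sum_ninvolution (fun σ => Function.update σ A (!σ A)) (fun σ => ?_)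
    (fun σ _ h => by simpa using congrFun h A) (fun _ => Finset.mem_univ _)
    (fun σ => by simp)
  rw [Jc_update_not]
  exact signTerm_mul_Z_add_flipJ β _ A (Jc_ne_zero hJ0 σ A) (hΔ σ)

lemma energy_gaugeJ (τ : V → Bool) (J : Finset V → ℝ) (S : V → Bool) :
    energy (gaugeJ τ J) S = energy J fun i => S i == τ i := by
  simp only [energy, gaugeJ, spin_beq, Finset.prod_mul_distrib]
  congr 1
  exact Finset.sum_congr rfl fun B _ => by ring

lemma sum_comp_beq {M : Type*} [AddCommMonoid M] (τ : V → Bool) (f : (V → Bool) → M) :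
    ∑ S : V → Bool, f (fun i => S i == τ i) = ∑ S : V → Bool, f S := by
  have hinv : Function.Involutive fun (S : V → Bool) (i : V) => S i == τ i := fun S => by
    funext i
    show ((S i == τ i) == τ i) = S i
    cases S i <;> cases τ i <;> rfl
  exact Equiv.sum_comp hinv.toPerm f

lemma Z_gaugeJ (β : ℝ) (τ : V → Bool) (J : Finset V → ℝ) : Z β (gaugeJ τ J) = Z β J := by
  simp only [Z, energy_gaugeJ]
  exact sum_comp_beq τ fun S => exp (-β * energy J S)

lemma eA_gaugeJ (β : ℝ) (τ : V → Bool) (J : Finset V → ℝ) (A : Finset V) :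
    eA β (gaugeJ τ J) A = eA β J A := by
  have hcoupling : ∀ S : V → Bool, gaugeJ τ J A * ∏ i ∈ A, spin (S i)
      = J A * ∏ i ∈ A, spin (S i == τ i) := fun S => by
    simp only [gaugeJ, spin_beq, Finset.prod_mul_distrib]
    ring
  simp only [eA, texp, Z_gaugeJ, energy_gaugeJ, hcoupling]
  congr 1
  exact sum_comp_beq τ fun S => -(J A * ∏ i ∈ A, spin (S i)) * exp (-β * energy J S)

lemma Δ_gaugeJ (β : ℝ) (τ : V → Bool) (J : Finset V → ℝ) (A : Finset V) :
    Δ β (gaugeJ τ J) A = Δ β J A := by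
  rw [Δ, Δ, eA_gaugeJ]
  rcases prod_spin_eq_one_or A τ with h | h <;> simp [gaugeJ, h, tanh_neg]

lemma signTerm_gaugeJ (β : ℝ) (τ : V → Bool) (J : Finset V → ℝ) (A : Finset V) :
    signTerm β (gaugeJ τ J) A = signTerm β J A := by
  rw [signTerm, signTerm, Δ_gaugeJ]
  rcases prod_spin_eq_one_or A τ with h | h
  · simp [gaugeJ, h]
  · simp only [gaugeJ, h, mul_neg_one, sinh_mul_neg_div_two_mul_neg]

lemma prob_eq_pow_mul_exp {p κ x : ℝ} (hp : p = κ * exp x) (hq : 1 - p = κ * exp (-x))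
    (σ : Finset V → Bool) :
    prob p σ = κ ^ Fintype.card (Finset V) * exp (x * ∑ B : Finset V, spin (σ B)) := by
  have hfactor : ∀ B : Finset V, (if σ B then p else 1 - p) = κ * exp (x * spin (σ B)) :=
    fun B => by cases σ B <;> norm_num [spin, ← hp, ← hq]
  rw [prob, Finset.prod_congr rfl fun B _ => hfactor B, Finset.prod_mul_distrib,
    Finset.prod_const, Finset.card_univ, Finset.mul_sum, exp_sum]

lemma sum_prob_gaugeSign {p κ β J0 : ℝ} (hp : p = κ * exp (β * J0))
    (hq : 1 - p = κ * exp (-(β * J0))) (σ : Finset V → Bool) :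
    ∑ τ : V → Bool, prob p (gaugeSign τ σ) = κ ^ Fintype.card (Finset V) * Z β (Jc J0 σ) := by
  have hexponent : ∀ τ : V → Bool,
      β * J0 * ∑ B : Finset V, spin (gaugeSign τ σ B) = -β * energy (Jc J0 σ) τ := fun τ => by
    simp only [energy, gaugeSign, Jc, spin_beq, spin_parity, neg_mul_neg, Finset.mul_sum]
    exact Finset.sum_congr rfl fun B _ => by ring
  simp only [prob_eq_pow_mul_exp hp hq, hexponent, ← Finset.mul_sum, Z]

lemma pow_mul_sum_prob_mul_of_gauge_invariant {p κ β J0 : ℝ} (hp : p = κ * exp (β * J0))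
    (hq : 1 - p = κ * exp (-(β * J0))) (Q : (Finset V → Bool) → ℝ)
    (hQ : ∀ τ σ, Q (gaugeSign τ σ) = Q σ) :
    2 ^ Fintype.card V * ∑ σ : Finset V → Bool, prob p σ * Q σ
      = κ ^ Fintype.card (Finset V) * ∑ σ : Finset V → Bool, Q σ * Z β (Jc J0 σ) := by
  have hreindex : ∀ τ : V → Bool, ∑ σ : Finset V → Bool, prob p (gaugeSign τ σ) * Q (gaugeSign τ σ)
      = ∑ σ : Finset V → Bool, prob p σ * Q σ := fun τ =>
    Equiv.sum_comp (gaugeSign_involutive τ).toPerm fun σ => prob p σ * Q σ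
  calc 2 ^ Fintype.card V * ∑ σ : Finset V → Bool, prob p σ * Q σ
      = ∑ τ : V → Bool, ∑ σ : Finset V → Bool, prob p (gaugeSign τ σ) * Q (gaugeSign τ σ) := by
        simp only [hreindex, Finset.sum_const, Finset.card_univ, Fintype.card_fun,
          Fintype.card_bool, nsmul_eq_mul, Nat.cast_pow, Nat.cast_ofNat]
    _ = ∑ σ : Finset V → Bool, (∑ τ : V → Bool, prob p (gaugeSign τ σ)) * Q σ := by
        simp only [hQ, Finset.sum_mul]
        exact Finset.sum_comm
    _ = κ ^ Fintype.card (Finset V) * ∑ σ : Finset V → Bool, Q σ * Z β (Jc J0 σ) := by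
        simp only [sum_prob_gaugeSign hp hq, Finset.mul_sum]
        exact Finset.sum_congr rfl fun σ _ => by ring

lemma sum_prob_mul_signTerm_eq_zero {p κ β J0 : ℝ} (hp : p = κ * exp (β * J0))
    (hq : 1 - p = κ * exp (-(β * J0))) (A : Finset V) (hJ0 : J0 ≠ 0)
    (hΔ : ∀ σ : Finset V → Bool, Δ β (Jc J0 σ) A ≠ 0) :
    ∑ σ : Finset V → Bool, prob p σ * signTerm β (Jc J0 σ) A = 0 := by
  have h := pow_mul_sum_prob_mul_of_gauge_invariant hp hq (fun σ => signTerm β (Jc J0 σ) A)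
    fun τ σ => by rw [Jc_gaugeSign, signTerm_gaugeJ]
  rw [sum_signTerm_Jc_mul_Z β J0 A hJ0 hΔ, mul_zero] at h
  exact (mul_eq_zero.mp h).resolve_left (by positivity)

end Thermal

/-- on the Nishimori line the sign identity specializes, and
the expected sign of `Δ` is nonpositive. -/
theorem sign_identity_nishimori {V : Type*} [Fintype V] [DecidableEq V]
    (J0 p βN : ℝ) (A : Finset V)
    (hJ : 0 < J0) (hp : 1 / 2 < p) (hp1 : p < 1)
    (hβN : Real.exp (2 * βN * J0) = p / (1 - p))
    (hnz : ∀ σ : Finset V → Bool, Δ βN (Jc J0 σ) A ≠ 0) :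
    (-(∑ σ : Finset V → Bool,
          prob p σ * (Δ βN (Jc J0 σ) A / |Δ βN (Jc J0 σ) A|)) =
        ∑ σ : Finset V → Bool,
          prob p σ * (Real.sinh (2 * βN * Jc J0 σ A) / (2 * Jc J0 σ A) *
            |Δ βN (Jc J0 σ) A|)) ∧
      (∑ σ : Finset V → Bool,
          prob p σ * (Δ βN (Jc J0 σ) A / |Δ βN (Jc J0 σ) A|)) ≤ 0 := by
  have hq : 0 < 1 - p := by linarith
  have hβ : 0 < βN := by
    have h2βJ : 0 < 2 * βN * J0 := by
      rw [← one_lt_exp_iff, hβN, one_lt_div hq]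
      linarith
    have h2β : 0 < 2 * βN := pos_of_mul_pos_left h2βJ hJ.le
    linarith
  have hexp : exp (βN * J0) * exp (βN * J0) = p / (1 - p) := by
    rw [← exp_add, ← hβN]
    ring_nf
  have hsum := sum_prob_mul_signTerm_eq_zero (p := p) (κ := (1 - p) * exp (βN * J0))
    (by rw [mul_assoc, hexp]; field_simp)
    (by rw [mul_assoc, ← exp_add, add_neg_cancel, exp_zero, mul_one]) A hJ.ne' hnz
  have hnonneg : 0 ≤ ∑ σ : Finset V → Bool,
      prob p σ * (sinh (2 * βN * Jc J0 σ A) / (2 * Jc J0 σ A) * |Δ βN (Jc J0 σ) A|) :=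
    Finset.sum_nonneg fun σ _ => mul_nonneg
      (Finset.prod_nonneg fun B _ => by split <;> linarith)
      (mul_nonneg (sinh_two_mul_mul_div_two_mul_pos hβ (Jc_ne_zero hJ.ne' σ A)).le
        (abs_nonneg _))
  simp only [signTerm, mul_add, Finset.sum_add_distrib] at hsum
  exact ⟨by linarith, by linarith⟩
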